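/- arXiv:2102.07287 — 2 statements merged into one kernel-verified Lean document; each statement's English description precedes it below -/
import Mathlib

section
/- For every α > 0, the Rényi entropy function h_α is β-Hölder continuous on [0,1] with β = min(α, 1/2). -/
open scoped NNReal

/-- The α-Rényi entropy function on [0,1]. -/
noncomputable def renyiEntropy (α : ℝ) (x : ℝ) : ℝ :=
  if x = 0 ∨ x = 1 then 0
  else if α = 1 then -x * Real.log x - (1 - x) * Real.log (1 - x)
  else (1 - α)⁻¹ * Real.log (x ^ α + (1 - x) ^ α)

/-!
With `β = min α (1/2)`, the derivative of `h_α` on `(0, 1)` is bounded by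
`K (s ^ (β - 1) + (1 - s) ^ (β - 1))`: for `α ≠ 1` it is `(1 - α)⁻¹ α (s ^ (α - 1) - (1 - s) ^ (α - 1)) / (s ^ α + (1 - s) ^ α)`, whose
denominator is at least `2 ^ (-α)`, and for `α = 1` it is `log (1 - s) - log s`, where
`-log s ≤ 2 s ^ (-1/2)`. This bound is the derivative of `(K / β) (s ^ β - (1 - s) ^ β)`, so between
`x ≤ y` the function `h_α` moves by at most the increment of that comparison function, which is at
most `(2K / β) (y - x) ^ β` because `t ↦ t ^ β` is subadditive.
-/

open Real Set

theorem holderOnWith_of_dist_le {X Y : Type*} [PseudoMetricSpace X] [PseudoMetricSpace Y]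
    {f : X → Y} {s : Set X} {C : ℝ} {r : ℝ≥0} (hC : 0 ≤ C)
    (h : ∀ x ∈ s, ∀ y ∈ s, dist (f x) (f y) ≤ C * dist x y ^ (r : ℝ)) :
    HolderOnWith C.toNNReal r f s := by
  intro x hx y hy
  rw [edist_dist, edist_dist, ENNReal.ofReal_rpow_of_nonneg dist_nonneg r.coe_nonneg,
    ENNReal.ofNNReal_toNNReal, ← ENNReal.ofReal_mul hC]
  exact ENNReal.ofReal_le_ofReal (h x hx y hy)

theorem Real.rpow_sub_rpow_le_rpow_sub {a b p : ℝ} (hb : 0 ≤ b) (hba : b ≤ a) (hp₀ : 0 ≤ p)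
    (hp₁ : p ≤ 1) : a ^ p - b ^ p ≤ (a - b) ^ p := by
  have := rpow_add_le_add_rpow (sub_nonneg.2 hba) hb hp₀ hp₁
  rw [sub_add_cancel] at this
  linarith

theorem abs_sub_le_sub_of_abs_deriv_le {f f' g g' : ℝ → ℝ} {a b x y : ℝ}
    (hf : ContinuousOn f (Icc a b)) (hg : ContinuousOn g (Icc a b))
    (hf' : ∀ s ∈ Ioo a b, HasDerivAt f (f' s) s) (hg' : ∀ s ∈ Ioo a b, HasDerivAt g (g' s) s)
    (hbound : ∀ s ∈ Ioo a b, |f' s| ≤ g' s) (hx : x ∈ Icc a b) (hy : y ∈ Icc a b)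
    (hxy : x ≤ y) : |f y - f x| ≤ g y - g x := by
  have hmono : ∀ ε : ℝ, |ε| = 1 → MonotoneOn (fun s => g s - ε * f s) (Icc a b) := by
    intro ε hε
    refine monotoneOn_of_hasDerivWithinAt_nonneg (convex_Icc a b)
      (hg.sub (hf.const_smul ε)) (f' := fun s => g' s - ε * f' s) ?_ ?_ <;>
      rw [interior_Icc] <;> intro s hs
    · exact ((hg' s hs).sub ((hf' s hs).const_mul ε)).hasDerivWithinAt
    · have : ε * f' s ≤ |f' s| := by
        simpa [abs_mul, hε] using le_abs_self (ε * f' s)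
      linarith [hbound s hs]
  have hplus := hmono 1 abs_one hx hy hxy
  have hminus := hmono (-1) (by simp) hx hy hxy
  simp only at hplus hminus
  rw [abs_le]
  constructor <;> linarith

theorem hasDerivAt_rpow_sub_one_sub_rpow {β s : ℝ} (hs : s ∈ Ioo (0 : ℝ) 1) :
    HasDerivAt (fun t => t ^ β - (1 - t) ^ β) (β * (s ^ (β - 1) + (1 - s) ^ (β - 1))) s := by
  have hleft := hasDerivAt_rpow_const (p := β) (Or.inl hs.1.ne')
  have hright := (hasDerivAt_rpow_const (p := β) (Or.inl (sub_pos.2 hs.2).ne')).comp s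
    ((hasDerivAt_id s).const_sub 1)
  exact (hleft.sub hright).congr_deriv (by ring)

theorem rpow_sub_one_sub_rpow_sub_le {β x y : ℝ} (hβ₀ : 0 ≤ β) (hβ₁ : β ≤ 1) (hx : 0 ≤ x)
    (hxy : x ≤ y) (hy : y ≤ 1) :
    (y ^ β - (1 - y) ^ β) - (x ^ β - (1 - x) ^ β) ≤ 2 * (y - x) ^ β := by
  have h₁ := rpow_sub_rpow_le_rpow_sub hx hxy hβ₀ hβ₁
  have h₂ := rpow_sub_rpow_le_rpow_sub (a := 1 - x) (b := 1 - y) (by linarith) (by linarith)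
    hβ₀ hβ₁
  rw [sub_sub_sub_cancel_left] at h₂
  linarith

theorem rpow_sub_one_add_rpow_sub_one_le {β γ s : ℝ} (hs : s ∈ Ioo (0 : ℝ) 1) (hβγ : β ≤ γ) :
    s ^ (γ - 1) + (1 - s) ^ (γ - 1) ≤ s ^ (β - 1) + (1 - s) ^ (β - 1) := by
  have h₁ := sub_pos.2 hs.2
  gcongr ?_ + ?_
  · exact rpow_le_rpow_of_exponent_ge hs.1 hs.2.le (by linarith)
  · exact rpow_le_rpow_of_exponent_ge h₁ (by linarith [hs.1]) (by linarith)

theorem holderOnWith_of_abs_deriv_le {f : ℝ → ℝ} {β K : ℝ} (hβ₀ : 0 < β) (hβ₁ : β ≤ 1)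
    (hK : 0 ≤ K) (hf : ContinuousOn f (Icc 0 1)) (hf' : DifferentiableOn ℝ f (Ioo 0 1))
    (hbound : ∀ s ∈ Ioo (0 : ℝ) 1, |deriv f s| ≤ K * (s ^ (β - 1) + (1 - s) ^ (β - 1))) :
    HolderOnWith (2 * K / β).toNNReal β.toNNReal f (Icc 0 1) := by
  set φ : ℝ → ℝ := fun t => K / β * (t ^ β - (1 - t) ^ β)
  have hφ : ContinuousOn φ (Icc 0 1) := by fun_prop (disch := positivity)
  have hφ' : ∀ s ∈ Ioo (0 : ℝ) 1,
      HasDerivAt φ (K * (s ^ (β - 1) + (1 - s) ^ (β - 1))) s := fun s hs =>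
    ((hasDerivAt_rpow_sub_one_sub_rpow hs).const_mul (K / β)).congr_deriv (by field_simp)
  have hf'' : ∀ s ∈ Ioo (0 : ℝ) 1, HasDerivAt f (deriv f s) s := fun s hs =>
    (hf'.differentiableAt (isOpen_Ioo.mem_nhds hs)).hasDerivAt
  have key : ∀ x ∈ Icc (0 : ℝ) 1, ∀ y ∈ Icc (0 : ℝ) 1, x ≤ y →
      |f y - f x| ≤ 2 * K / β * (y - x) ^ β := fun x hx y hy hxy => calc
    |f y - f x| ≤ φ y - φ x := abs_sub_le_sub_of_abs_deriv_le hf hφ hf'' hφ' hbound hx hy hxy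
    _ = K / β * ((y ^ β - (1 - y) ^ β) - (x ^ β - (1 - x) ^ β)) := by ring
    _ ≤ K / β * (2 * (y - x) ^ β) := by
      gcongr
      exact rpow_sub_one_sub_rpow_sub_le hβ₀.le hβ₁ hx.1 hxy hy.2
    _ = 2 * K / β * (y - x) ^ β := by ring
  refine holderOnWith_of_dist_le (by positivity) fun x hx y hy => ?_
  rw [coe_toNNReal _ hβ₀.le, dist_eq, dist_eq]
  rcases le_total x y with hxy | hyx
  · rw [abs_sub_comm, abs_sub_comm x, abs_of_nonneg (sub_nonneg.2 hxy)]
    exact key x hx y hy hxy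
  · rw [abs_of_nonneg (sub_nonneg.2 hyx)]
    exact key y hy x hx hyx

theorem renyiEntropy_one : renyiEntropy 1 = binEntropy := by
  ext x
  unfold renyiEntropy
  split_ifs with hx
  · rcases hx with rfl | rfl <;> simp
  · simp only [binEntropy, log_inv]
    ring
  · contradiction

theorem renyiEntropy_of_ne {α : ℝ} (hα₀ : α ≠ 0) (hα₁ : α ≠ 1) :
    renyiEntropy α = fun x => (1 - α)⁻¹ * log (x ^ α + (1 - x) ^ α) := by
  ext x
  unfold renyiEntropy
  split_ifs with hx
  · rcases hx with rfl | rfl <;> simp [zero_rpow hα₀]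
  · rfl

theorem neg_log_le_two_mul_rpow_neg_half {s : ℝ} (hs : 0 < s) :
    -log s ≤ 2 * s ^ (-(1 / 2) : ℝ) := by
  have h := log_le_sub_one_of_pos (rpow_pos_of_pos hs (-(1 / 2) : ℝ))
  rw [log_rpow hs] at h
  linarith [rpow_pos_of_pos hs (-(1 / 2) : ℝ)]

theorem abs_log_one_sub_sub_log_le {s : ℝ} (hs : s ∈ Ioo (0 : ℝ) 1) :
    |log (1 - s) - log s| ≤ 2 * (s ^ ((1 / 2 : ℝ) - 1) + (1 - s) ^ ((1 / 2 : ℝ) - 1)) := by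
  have hs' := sub_pos.2 hs.2
  have h₁ := neg_log_le_two_mul_rpow_neg_half hs.1
  have h₂ := neg_log_le_two_mul_rpow_neg_half hs'
  have h₃ := log_nonpos hs.1.le hs.2.le
  have h₄ := log_nonpos hs'.le (by linarith [hs.1])
  norm_num only
  rw [abs_le]
  constructor <;> linarith

theorem half_rpow_le_rpow_add_one_sub_rpow {α s : ℝ} (hα : 0 ≤ α) (hs : s ∈ Icc (0 : ℝ) 1) :
    (1 / 2) ^ α ≤ s ^ α + (1 - s) ^ α := by
  have h₀ := rpow_nonneg hs.1 α
  have h₁ := rpow_nonneg (sub_nonneg.2 hs.2) α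
  rcases le_total s (1 / 2) with h | h
  · linarith [rpow_le_rpow (by norm_num) (by linarith : (1 / 2 : ℝ) ≤ 1 - s) hα]
  · linarith [rpow_le_rpow (by norm_num) h hα]

theorem rpow_add_one_sub_rpow_pos {α s : ℝ} (hα : 0 ≤ α) (hs : s ∈ Icc (0 : ℝ) 1) :
    0 < s ^ α + (1 - s) ^ α :=
  (rpow_pos_of_pos (by norm_num) α).trans_le (half_rpow_le_rpow_add_one_sub_rpow hα hs)

theorem hasDerivAt_log_rpow_add_one_sub_rpow {α s : ℝ} (hα : 0 ≤ α) (hs : s ∈ Ioo (0 : ℝ) 1) :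
    HasDerivAt (fun x => log (x ^ α + (1 - x) ^ α))
      (α * (s ^ (α - 1) - (1 - s) ^ (α - 1)) / (s ^ α + (1 - s) ^ α)) s := by
  have hleft := hasDerivAt_rpow_const (p := α) (Or.inl hs.1.ne')
  have hright : HasDerivAt (fun x => (1 - x) ^ α) (α * (1 - s) ^ (α - 1) * -1) s :=
    (hasDerivAt_rpow_const (Or.inl (sub_pos.2 hs.2).ne')).comp s ((hasDerivAt_id s).const_sub 1)
  refine ((hleft.fun_add hright).log (rpow_add_one_sub_rpow_pos hα (Ioo_subset_Icc_self hs)).ne')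
    |>.congr_deriv (by ring)

theorem abs_deriv_log_rpow_add_one_sub_rpow_le {α s : ℝ} (hα : 0 ≤ α) (hs : s ∈ Ioo (0 : ℝ) 1) :
    |α * (s ^ (α - 1) - (1 - s) ^ (α - 1)) / (s ^ α + (1 - s) ^ α)|
      ≤ 2 ^ α * α * (s ^ (α - 1) + (1 - s) ^ (α - 1)) := by
  have hsum := rpow_add_one_sub_rpow_pos hα (Ioo_subset_Icc_self hs)
  have hhalf := half_rpow_le_rpow_add_one_sub_rpow hα (Ioo_subset_Icc_self hs)
  have h₀ := rpow_nonneg hs.1.le (α - 1)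
  have h₁ := rpow_nonneg (sub_pos.2 hs.2).le (α - 1)
  have hdiff : |s ^ (α - 1) - (1 - s) ^ (α - 1)| ≤ s ^ (α - 1) + (1 - s) ^ (α - 1) := by
    rw [abs_le]; constructor <;> linarith
  rw [abs_div, abs_mul, abs_of_nonneg hα, abs_of_pos hsum, div_le_iff₀ hsum]
  calc α * |s ^ (α - 1) - (1 - s) ^ (α - 1)|
      ≤ α * (s ^ (α - 1) + (1 - s) ^ (α - 1)) := by gcongr
    _ = 2 ^ α * α * (s ^ (α - 1) + (1 - s) ^ (α - 1)) * (1 / 2) ^ α := by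
      rw [div_rpow one_pos.le two_pos.le, one_rpow]
      field_simp
    _ ≤ 2 ^ α * α * (s ^ (α - 1) + (1 - s) ^ (α - 1)) * (s ^ α + (1 - s) ^ α) := by gcongr

theorem continuousOn_renyiEntropy {α : ℝ} (hα : 0 < α) :
    ContinuousOn (renyiEntropy α) (Icc 0 1) := by
  by_cases hα₁ : α = 1
  · rw [hα₁, renyiEntropy_one]
    exact binEntropy_continuous.continuousOn
  · rw [renyiEntropy_of_ne hα.ne' hα₁]
    have hsum : Continuous fun x : ℝ => x ^ α + (1 - x) ^ α := by
      fun_prop (disch := exact hα.le)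
    exact continuousOn_const.mul
      (hsum.continuousOn.log fun s hs => (rpow_add_one_sub_rpow_pos hα.le hs).ne')

theorem differentiableOn_renyiEntropy {α : ℝ} (hα : 0 < α) :
    DifferentiableOn ℝ (renyiEntropy α) (Ioo 0 1) := by
  by_cases hα₁ : α = 1
  · rw [hα₁, renyiEntropy_one]
    exact fun s hs => (differentiableAt_binEntropy hs.1.ne' hs.2.ne).differentiableWithinAt
  · rw [renyiEntropy_of_ne hα.ne' hα₁]
    exact fun s hs => ((hasDerivAt_log_rpow_add_one_sub_rpow hα.le hs).const_mul _)
      |>.differentiableAt.differentiableWithinAt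

theorem exists_abs_deriv_renyiEntropy_le {α β : ℝ} (hα : 0 < α) (hβα : β ≤ α) (hβ : β ≤ 1 / 2) :
    ∃ K, 0 ≤ K ∧ ∀ s ∈ Ioo (0 : ℝ) 1,
      |deriv (renyiEntropy α) s| ≤ K * (s ^ (β - 1) + (1 - s) ^ (β - 1)) := by
  by_cases hα₁ : α = 1
  · refine ⟨2, zero_le_two, fun s hs => ?_⟩
    rw [hα₁, renyiEntropy_one, deriv_binEntropy]
    refine (abs_log_one_sub_sub_log_le hs).trans ?_
    exact mul_le_mul_of_nonneg_left (rpow_sub_one_add_rpow_sub_one_le hs hβ) zero_le_two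
  · refine ⟨|1 - α|⁻¹ * (2 ^ α * α), by positivity, fun s hs => ?_⟩
    rw [renyiEntropy_of_ne hα.ne' hα₁,
      ((hasDerivAt_log_rpow_add_one_sub_rpow hα.le hs).const_mul _).deriv, abs_mul, abs_inv,
      mul_assoc]
    gcongr
    refine (abs_deriv_log_rpow_add_one_sub_rpow_le hα.le hs).trans ?_
    exact mul_le_mul_of_nonneg_left (rpow_sub_one_add_rpow_sub_one_le hs hβα) (by positivity)

/-- For every `α > 0`, the Rényi entropy function `h_α` is `β`-Hölder continuous on
`[0,1]` with `β = min (α, 1/2)`. -/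
theorem renyiEntropy_holder (α : ℝ) (hα : 0 < α) :
    ∃ C : ℝ≥0, HolderOnWith C (Real.toNNReal (min α (1 / 2)))
      (renyiEntropy α) (Set.Icc (0 : ℝ) 1) := by
  obtain ⟨K, hK, hbound⟩ :=
    exists_abs_deriv_renyiEntropy_le hα (min_le_left α (1 / 2)) (min_le_right α (1 / 2))
  exact ⟨_, holderOnWith_of_abs_deriv_le (lt_min hα one_half_pos)
    ((min_le_right α (1 / 2)).trans one_half_lt_one.le) hK (continuousOn_renyiEntropy hα)
    (differentiableOn_renyiEntropy hα) hbound⟩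
end

section
/- For every l ∈ ℕ, j' ∈ ℕ, 0 < δ < 1 and t ≥ 0, the j'-th derivative of the l-th Laguerre polynomial satisfies |L_l^{(j')}(t)| ≤ (2/δ)^l · exp(δ t). -/
open Polynomial

/-- The `l`-th Laguerre polynomial `L_l(t) = Σ_{k=0}^{l} C(l,k) (−1)^k t^k / k!`. -/
noncomputable def laguerre (l : ℕ) : Polynomial ℝ :=
  ∑ k ∈ Finset.range (l + 1),
    Polynomial.C ((-1 : ℝ) ^ k * (l.choose k : ℝ) / (Nat.factorial k : ℝ)) * Polynomial.X ^ k

/-- Bound on the derivatives of the Laguerre polynomials: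
`|L_l^{(j')}(t)| ≤ (2/δ)^l exp(δ t)` for `0 < δ < 1` and `t ≥ 0`. -/
theorem laguerre_deriv_bound (l j' : ℕ) (δ t : ℝ) (hδ0 : 0 < δ) (hδ1 : δ < 1) (ht : 0 ≤ t) :
    |((Polynomial.derivative (R := ℝ))^[j'] (laguerre l)).eval t| ≤
      (2 / δ) ^ l * Real.exp (δ * t) := by
  have heval : ((Polynomial.derivative (R := ℝ))^[j'] (laguerre l)).eval t
      = ∑ k ∈ Finset.range (l + 1),
        ((-1 : ℝ) ^ k * (l.choose k : ℝ) / (Nat.factorial k : ℝ)) *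
          ((Nat.descFactorial k j' : ℝ) * t ^ (k - j')) := by
    unfold laguerre
    rw [Polynomial.iterate_derivative_sum]
    simp [Polynomial.iterate_derivative_C_mul, Polynomial.iterate_derivative_X_pow_eq_C_mul,
      Polynomial.eval_finset_sum, mul_assoc]
  rw [heval]
  have habs := Finset.abs_sum_le_sum_abs
    (fun k => ((-1 : ℝ) ^ k * (l.choose k : ℝ) / (Nat.factorial k : ℝ)) *
      ((Nat.descFactorial k j' : ℝ) * t ^ (k - j'))) (Finset.range (l + 1))
  refine habs.trans ?_
  -- bound each term
  set g : ℕ → ℝ := fun k => if j' ≤ k then (δ * t) ^ (k - j') / (Nat.factorial (k - j') : ℝ) else 0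
    with hg
  have hterm : ∀ k ∈ Finset.range (l + 1),
      |((-1 : ℝ) ^ k * (l.choose k : ℝ) / (Nat.factorial k : ℝ)) *
        ((Nat.descFactorial k j' : ℝ) * t ^ (k - j'))|
      ≤ (2 / δ) ^ l * g k := by
    intro k hk
    rw [Finset.mem_range, Nat.lt_succ_iff] at hk
    by_cases hjk : j' ≤ k
    · have hfac : ((k - j').factorial : ℝ) * (Nat.descFactorial k j' : ℝ) = (k.factorial : ℝ) := by
        rw [← Nat.cast_mul, Nat.factorial_mul_descFactorial hjk]
      have hm : k - j' ≤ l := le_trans (Nat.sub_le k j') hk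
      have h1 : |((-1 : ℝ) ^ k * (l.choose k : ℝ) / (Nat.factorial k : ℝ)) *
          ((Nat.descFactorial k j' : ℝ) * t ^ (k - j'))|
          = (l.choose k : ℝ) * (t ^ (k - j') / (Nat.factorial (k - j') : ℝ)) := by
        rw [abs_mul, abs_div, abs_mul, abs_pow, abs_neg, abs_one, one_pow, one_mul,
          abs_mul, abs_pow, abs_of_nonneg ht,
          Nat.abs_cast, Nat.abs_cast, Nat.abs_cast]
        field_simp
        rw [← hfac]
        ring
      rw [h1, hg]
      simp only [hjk, if_true]
      have hchoose : (l.choose k : ℝ) ≤ 2 ^ l := by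
        have : l.choose k ≤ 2 ^ l := by
          calc l.choose k ≤ ∑ i ∈ Finset.range (l + 1), l.choose i :=
                Finset.single_le_sum (fun i _ => Nat.zero_le _)
                  (Finset.mem_range.2 (Nat.lt_succ_of_le hk))
            _ = 2 ^ l := Nat.sum_range_choose l
        exact_mod_cast this
      have hδl : δ ^ l ≤ δ ^ (k - j') := pow_le_pow_of_le_one hδ0.le hδ1.le hm
      have hmul : (δ * t) ^ (k - j') = δ ^ (k - j') * t ^ (k - j') := mul_pow δ t _
      rw [div_pow, hmul]
      rw [div_mul_eq_mul_div, le_div_iff₀ (by positivity : (0:ℝ) < δ ^ l)]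
      calc (l.choose k : ℝ) * (t ^ (k - j') / ((k - j').factorial : ℝ)) * δ ^ l
          ≤ 2 ^ l * (t ^ (k - j') / ((k - j').factorial : ℝ)) * δ ^ (k - j') :=
            mul_le_mul (mul_le_mul_of_nonneg_right hchoose (by positivity)) hδl
              (by positivity) (by positivity)
        _ = 2 ^ l * (δ ^ (k - j') * t ^ (k - j') / ((k - j').factorial : ℝ)) := by ring
    · push_neg at hjk
      rw [Nat.descFactorial_eq_zero_iff_lt.2 hjk]
      simp [hg, not_le.2 hjk]
  refine (Finset.sum_le_sum hterm).trans ?_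
  rw [← Finset.mul_sum]
  refine mul_le_mul_of_nonneg_left ?_ (by positivity)
  -- ∑ g ≤ exp (δ t)
  have hsub : ∑ k ∈ Finset.range (l + 1), g k = ∑ k ∈ Finset.Ico j' (l + 1), g k := by
    refine (Finset.sum_subset (by intro x hx; simp at hx ⊢; omega) ?_).symm
    intro x hx hnx
    rw [Finset.mem_range] at hx
    rw [Finset.mem_Ico] at hnx
    have : x < j' := by omega
    simp [hg, not_le.2 this]
  rw [hsub, Finset.sum_Ico_eq_sum_range]
  have : ∀ i ∈ Finset.range (l + 1 - j'), g (j' + i) = (δ * t) ^ i / (Nat.factorial i : ℝ) := by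
    intro i _
    simp [hg, Nat.le_add_right, Nat.add_sub_cancel_left]
  rw [Finset.sum_congr rfl this]
  exact Real.sum_le_exp_of_nonneg (by positivity) _
end
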